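/- arXiv:2108.10190 — 6 statements merged into one kernel-verified Lean document; each statement's English description precedes it below -/
import Mathlib

section
/- Let r and s be primes and let v and w be positive integers such that r^v + 1 = s^w. Then one of the following holds: (i) (r,s,v,w) = (2,3,3,2); (ii) r = 2, w = 1, and s = 2^v + 1 is a Fermat prime; (iii) s = 2, v = 1, and r = 2^w - 1 is a Mersenne prime. -/
/-!
By parity one of `r`, `s` is `2` and the other is odd. An odd exponent is split off with the
geometric sum `x ^ n - 1 = (x - 1) ∑_{i<n} x ^ i` (with `x = s`, resp. `x = -r`): for `x` and `n`
odd the sum is odd and positive and divides a power of two, so it is `1` and `n = 1`. For an even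
exponent, `s ^ (2k) - 1 = (s ^ k - 1)(s ^ k + 1)` is a product of two powers of two differing by
`2`, which forces `s ^ k = 3`; and `r ^ (2k) + 1 ≡ 2 [MOD 4]` is a power of two only if
`r ^ k = 1`.
-/

lemma Int.eq_one_of_odd_of_dvd_two_pow {d : ℤ} {m : ℕ} (hd : Odd d) (hpos : 0 < d)
    (h : d ∣ 2 ^ m) : d = 1 := by
  have h2 : ¬ (2 : ℤ) ∣ d := by rwa [← even_iff_two_dvd, Int.not_even_iff_odd]
  have hcop : IsCoprime d (2 ^ m) :=
    ((Prime.coprime_iff_not_dvd Int.prime_two).2 h2).symm.pow_right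
  rcases Int.isUnit_iff.1 (hcop.isUnit_of_dvd' dvd_rfl h) with h1 | h1 <;> omega

lemma Int.odd_geom_sum {x : ℤ} {n : ℕ} (hx : Odd x) (hn : Odd n) :
    Odd (∑ i ∈ Finset.range n, x ^ i) := by
  rw [← ZMod.intCast_eq_one_iff_odd] at hx ⊢
  push_cast
  simp [hx, ZMod.natCast_eq_one_iff_odd.2 hn]

lemma Int.pow_eq_self_of_pow_sub_one_dvd_two_pow {x : ℤ} {n m : ℕ} (hx : Odd x) (hn : Odd n)
    (h : x ^ n - 1 ∣ 2 ^ m) : x ^ n = x := by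
  have hgeom := geom_sum_mul x n
  have hsum : ∑ i ∈ Finset.range n, x ^ i = 1 :=
    eq_one_of_odd_of_dvd_two_pow (odd_geom_sum hx hn) hn.geom_sum_pos
      ((Dvd.intro _ hgeom).trans h)
  rw [hsum, one_mul] at hgeom
  linarith

lemma Nat.eq_two_of_mul_add_two_eq_two_pow {a m : ℕ} (h : a * (a + 2) = 2 ^ m) : a = 2 := by
  obtain ⟨i, -, rfl⟩ := (Nat.dvd_prime_pow Nat.prime_two).1 (Dvd.intro _ h)
  obtain ⟨j, -, hj⟩ := (Nat.dvd_prime_pow Nat.prime_two).1 (Dvd.intro_left _ h)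
  have hij : i < j := (Nat.pow_lt_pow_iff_right one_lt_two).1 (by omega)
  have hi : 2 ^ i ∣ 2 := (Nat.dvd_add_right dvd_rfl).1 (hj ▸ Nat.pow_dvd_pow 2 hij.le)
  rcases (Nat.dvd_prime Nat.prime_two).1 hi with hi1 | hi2
  · have : Even (2 ^ j) := Nat.even_pow.2 ⟨even_two, by rintro rfl; omega⟩
    rw [← hj, hi1] at this
    exact absurd this (by decide)
  · exact hi2

lemma Nat.eq_three_of_sq_eq_two_pow_add_one {b m : ℕ} (h : b ^ 2 = 2 ^ m + 1) :
    b = 3 ∧ m = 3 := by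
  obtain _ | a := b
  · simp at h
  have ha : a = 2 := eq_two_of_mul_add_two_eq_two_pow (m := m) (by linarith)
  subst ha
  exact ⟨rfl, Nat.pow_right_injective le_rfl (by simpa using h.symm)⟩

lemma Nat.eq_one_of_odd_of_sq_add_one_eq_two_pow {a m : ℕ} (ha : Odd a)
    (h : a ^ 2 + 1 = 2 ^ m) : a = 1 := by
  have hsq : a ^ 2 % 4 = 1 := by exact_mod_cast Int.sq_mod_four_eq_one_of_odd ha.natCast
  have hm : m < 2 := by
    by_contra! hm
    have : 4 ∣ 2 ^ m := Nat.pow_dvd_pow 2 hm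
    omega
  have hsq_le : a ^ 2 ≤ 1 := by interval_cases m <;> omega
  have := Nat.odd_iff.1 ha
  have := (Nat.pow_le_one_iff two_ne_zero).1 hsq_le
  omega

/-- Lemma 2.1 (Burness–Tong-Viet): if `r^v + 1 = s^w` with `r, s` primes and
`v, w` positive, then `(r,s,v,w) = (2,3,3,2)`, or `r = 2`, `w = 1` and
`s = 2^v + 1` is a Fermat prime, or `s = 2`, `v = 1` and `r = 2^w - 1` is a
Mersenne prime. -/
theorem stmt0 (r s v w : ℕ) (hr : r.Prime) (hs : s.Prime)
    (hv : 0 < v) (hw : 0 < w) (h : r ^ v + 1 = s ^ w) :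
    (r = 2 ∧ s = 3 ∧ v = 3 ∧ w = 2) ∨
    (r = 2 ∧ w = 1 ∧ s = 2 ^ v + 1) ∨
    (s = 2 ∧ v = 1 ∧ r = 2 ^ w - 1) := by
  have hz : (r : ℤ) ^ v + 1 = (s : ℤ) ^ w := by exact_mod_cast h
  rcases hr.eq_two_or_odd' with rfl | hro
  · have hso : Odd s :=
      (Nat.odd_pow_iff hw.ne').1 (h ▸ (Nat.even_pow.2 ⟨even_two, hv.ne'⟩).add_one)
    rcases Nat.even_or_odd w with ⟨k, rfl⟩ | hwo
    · obtain ⟨hsk, rfl⟩ := Nat.eq_three_of_sq_eq_two_pow_add_one (b := s ^ k) (m := v)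
        (by rw [h, ← pow_mul, mul_two])
      obtain ⟨rfl, rfl⟩ := Nat.prime_three.pow_eq_iff.1 hsk
      exact Or.inl ⟨rfl, rfl, rfl, rfl⟩
    · have hsw := Int.pow_eq_self_of_pow_sub_one_dvd_two_pow (m := v) hso.natCast hwo
        ⟨1, by push_cast at hz; linarith⟩
      obtain rfl : w = 1 := (Nat.pow_eq_self_iff hs.one_lt).1 (by exact_mod_cast hsw)
      exact Or.inr (Or.inl ⟨rfl, rfl, by simpa using h.symm⟩)
  · obtain rfl : s = 2 := hs.even_iff.1 (Nat.even_pow.1 (h ▸ hro.pow.add_one)).1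
    rcases Nat.even_or_odd v with ⟨k, rfl⟩ | hvo
    · have hrk := Nat.eq_one_of_odd_of_sq_add_one_eq_two_pow (hro.pow (n := k))
        (by rw [← h, ← pow_mul, mul_two])
      rcases Nat.pow_eq_one.1 hrk with rfl | rfl
      · exact absurd hr Nat.not_prime_one
      · omega
    · have hrv := Int.pow_eq_self_of_pow_sub_one_dvd_two_pow (x := -r) (m := w)
        hro.natCast.neg hvo ⟨-1, by rw [hvo.neg_pow]; push_cast at hz; linarith⟩
      rw [hvo.neg_pow, neg_inj] at hrv
      obtain rfl : v = 1 := (Nat.pow_eq_self_iff hr.one_lt).1 (by exact_mod_cast hrv)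
      exact Or.inr (Or.inr ⟨rfl, rfl, by omega⟩)
end

section
/- Let q = 2^f for a positive integer f. If q^2 - 1 has exactly one primitive prime divisor r (i.e., P_q^2 = {r}), then either (q,r) = (8,3), or r = q + 1 is a Fermat prime. -/
/-!
A prime is a primitive divisor of `q^2 - 1` exactly when it is odd and divides `q + 1`, so for
even `q` the hypothesis makes `q + 1 = r^k`. For `k = 1` this is the Fermat case. For `k ≥ 2` the
equation `r^k = 2^f + 1` has only the solution `3^2 = 2^3 + 1`: for even `k` the two factors of
`(r^(k/2) - 1)(r^(k/2) + 1) = 2^f` are powers of two differing by two, and for odd `k` the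
geometric sum `1 + r + ⋯ + r^(k-1)` would be an odd divisor of `2^f` larger than one.
-/

/-- The set of primitive prime divisors of `a^n - 1`. -/
def ppdSet (a n : ℕ) : Set ℕ :=
  {r | r.Prime ∧ r ∣ a ^ n - 1 ∧ ∀ i, 1 ≤ i → i < n → ¬ r ∣ a ^ i - 1}

theorem mem_ppdSet_two_iff {a r : ℕ} : r ∈ ppdSet a 2 ↔ r.Prime ∧ r ≠ 2 ∧ r ∣ a + 1 := by
  have hsq : a ^ 2 - 1 = (a + 1) * (a - 1) := by
    rw [← Nat.sq_sub_sq a 1, one_pow]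
  simp only [ppdSet, Set.mem_ofPred_eq, hsq]
  constructor
  · rintro ⟨hr, hdvd, hprim⟩
    have hr1 : ¬ r ∣ a - 1 := by simpa using hprim 1 le_rfl one_lt_two
    have hra : r ∣ a + 1 := (hr.dvd_mul.1 hdvd).resolve_right hr1
    refine ⟨hr, ?_, hra⟩
    rintro rfl
    exact hr1 (by omega)
  · rintro ⟨hr, hr2, hra⟩
    refine ⟨hr, hra.mul_right _, fun i hi1 hi2 hr1 => ?_⟩
    obtain rfl : i = 1 := by omega
    have hdiff : a + 1 - (a - 1) ∣ 2 := by
      rcases a with _ | a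
      · exact one_dvd 2
      · exact dvd_of_eq (by omega)
    have : r ∣ 2 := (Nat.dvd_sub hra (by simpa using hr1)).trans hdiff
    exact hr2 ((Nat.prime_dvd_prime_iff_eq hr Nat.prime_two).1 this)

theorem two_pow_eq_two_of_two_pow_add_two {a b : ℕ} (h : 2 ^ a + 2 = 2 ^ b) : 2 ^ a = 2 := by
  rcases a with _ | _ | a <;> rcases b with _ | _ | b <;> grind

theorem eq_three_of_sq_eq_two_pow_add_one {x f : ℕ} (h : x ^ 2 = 2 ^ f + 1) :
    x = 3 ∧ f = 3 := by
  have hx : 2 ≤ x := by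
    by_contra! hx
    interval_cases x <;> simp at h
  have hfac : (x - 1) * (x + 1) = 2 ^ f := by
    rw [mul_comm, ← Nat.sq_sub_sq, h]; simp
  obtain ⟨a, -, ha⟩ := (Nat.dvd_prime_pow Nat.prime_two).1 (Dvd.intro _ hfac)
  obtain ⟨b, -, hb⟩ := (Nat.dvd_prime_pow Nat.prime_two).1 (Dvd.intro_left _ hfac)
  have := two_pow_eq_two_of_two_pow_add_two (a := a) (b := b) (by omega)
  obtain rfl : x = 3 := by omega
  exact ⟨rfl, Nat.pow_right_injective le_rfl (by omega : 2 ^ f = 2 ^ 3)⟩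

theorem eq_one_of_pow_eq_two_pow_add_one_of_odd {p k f : ℕ} (hp : Odd p) (hk : Odd k)
    (h : p ^ k = 2 ^ f + 1) : k = 1 := by
  have hSodd : Odd (∑ i ∈ Finset.range k, p ^ i) := by
    rw [Finset.odd_sum_iff_odd_card_odd, Finset.filter_true_of_mem (fun i _ => hp.pow),
      Finset.card_range]
    exact hk
  have hkS : k ≤ ∑ i ∈ Finset.range k, p ^ i := by
    simpa using Finset.card_nsmul_le_sum (Finset.range k) (p ^ ·) 1
      (fun i _ => Nat.one_le_pow _ _ hp.pos)
  obtain ⟨m, rfl⟩ : ∃ m, p = m + 1 := ⟨p - 1, by have := hp.pos; omega⟩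
  have hgeom : (∑ i ∈ Finset.range k, (m + 1) ^ i) * m = 2 ^ f := by
    have := geom_sum_mul_add m k
    omega
  have hS1 : ∑ i ∈ Finset.range k, (m + 1) ^ i = 1 :=
    Nat.Coprime.eq_one_of_dvd (hSodd.coprime_two_right.pow_right f) (Dvd.intro _ hgeom)
  have := hk.pos
  omega

theorem eq_three_of_pow_eq_two_pow_add_one {p k f : ℕ} (hp : Odd p) (hk : 2 ≤ k)
    (h : p ^ k = 2 ^ f + 1) : p = 3 ∧ f = 3 := by
  rcases Nat.even_or_odd k with ⟨m, rfl⟩ | hodd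
  · obtain ⟨hpm, hf⟩ := eq_three_of_sq_eq_two_pow_add_one (x := p ^ m) (by rw [← h]; ring)
    exact ⟨(Nat.prime_three.pow_eq_iff.1 hpm).1, hf⟩
  · have := eq_one_of_pow_eq_two_pow_add_one_of_odd hp hodd h
    omega

theorem exists_add_one_eq_pow_of_ppdSet_two_eq_singleton {a r : ℕ} (ha : Even a)
    (h : ppdSet a 2 = {r}) : ∃ k, a + 1 = r ^ k := by
  refine ⟨_, Nat.eq_prime_pow_of_unique_prime_dvd (by omega) fun {d} hd hda => ?_⟩
  have hd2 : d ≠ 2 := by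
    rintro rfl
    exact Nat.not_even_iff_odd.2 ha.add_one (even_iff_two_dvd.2 hda)
  have : d ∈ ppdSet a 2 := mem_ppdSet_two_iff.2 ⟨hd, hd2, hda⟩
  rwa [h] at this

/-- If `q = 2^f` and `q^2 - 1` has a unique primitive prime divisor `r`, then
`(q, r) = (8, 3)` or `r = q + 1` is a Fermat prime. -/
theorem stmt6 (f q r : ℕ) (hf : 0 < f) (hq : q = 2 ^ f) (h : ppdSet q 2 = {r}) :
    (q = 8 ∧ r = 3) ∨ (r = q + 1 ∧ r.Prime ∧ ∃ k, 0 < k ∧ r = 2 ^ k + 1) := by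
  subst hq
  obtain ⟨hr, hr2, -⟩ := mem_ppdSet_two_iff.1 (h ▸ rfl : r ∈ ppdSet (2 ^ f) 2)
  obtain ⟨k, hk⟩ :=
    exists_add_one_eq_pow_of_ppdSet_two_eq_singleton (Nat.even_pow.2 ⟨even_two, hf.ne'⟩) h
  rcases k with _ | _ | k
  · simp at hk
  · rw [pow_one] at hk
    exact Or.inr ⟨hk.symm, hr, f, hf, hk.symm⟩
  · obtain ⟨rfl, rfl⟩ :=
      eq_three_of_pow_eq_two_pow_add_one (hr.odd_of_ne_two hr2) (by omega) hk.symm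
    exact Or.inl ⟨rfl, rfl⟩
end

section
/- Let q = p^f be a power of an odd prime p. If q^2 - 1 has exactly one primitive prime divisor r (i.e., P_q^2 = {r}), then either q = 9 (in which case r = 5), or f = 2^m for some integer m ≥ 0, or p is a Mersenne prime and f is prime. -/
/-- `b` is a Mersenne prime: a prime of the form `2^k - 1` with `k ≥ 1`. -/
def IsMersennePrime (b : ℕ) : Prop := b.Prime ∧ ∃ k, 0 < k ∧ b = 2 ^ k - 1

/-!
Since `gcd (q - 1, q + 1) = 2`, every odd prime factor of `q + 1` is a primitive prime divisor
of `q² - 1`, so `r` is the only odd prime factor of `p^f + 1`. Write `f = 2^m t` with `t` odd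
and put `s = p^(2^m)`. If `t ≥ 3`, then `s^t + 1 = (s + 1) c` with `c` odd and `c > t`, so `c`
is a power of `r`. If `r` also divided `s + 1`, lifting the exponent would give
`v_r(c) = v_r(t)`, hence `c ∣ t`, which is absurd; so `s + 1` is a power of two. An odd square
plus one is `2 mod 4`, which forces `m = 0`: `p + 1` is a power of two. Finally, if `t = a b`
were composite, the same argument would make `p^a + 1` a power of two, whereas its cofactor
over `p + 1` is odd and larger than one. (The case `q = 9` is covered by `f = 2`.)
-/

lemma three_le_of_odd_of_ne_one {n : ℕ} (hn : Odd n) (h1 : n ≠ 1) : 3 ≤ n := by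
  have := Nat.odd_iff.1 hn
  omega

lemma odd_of_add_one_mul_eq_pow_add_one {s t c : ℕ} (hs : Odd s) (ht : Odd t)
    (hc : (s + 1) * c = s ^ t + 1) : Odd c := by
  have hgeom : ((s : ℤ) + 1) * ∑ i ∈ Finset.range t, (-(s : ℤ)) ^ i = s ^ t + 1 := by
    have := geom_sum_mul (-(s : ℤ)) t
    rw [ht.neg_pow] at this
    linarith
  have hc' : (c : ℤ) = ∑ i ∈ Finset.range t, (-(s : ℤ)) ^ i :=
    mul_left_cancel₀ (by positivity : (s : ℤ) + 1 ≠ 0) (by rw [hgeom]; exact_mod_cast hc)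
  rw [← ZMod.natCast_eq_one_iff_odd, ← Int.cast_natCast, hc']
  push_cast
  simp [hs.natCast_zmod_two, ht.natCast_zmod_two]

lemma add_one_mul_lt_pow_add_one {s t : ℕ} (hs : 3 ≤ s) (ht : 2 ≤ t) :
    (s + 1) * t < s ^ t + 1 := by
  induction t, ht using Nat.le_induction with
  | base => nlinarith
  | succ t ht ih =>
    have : 1 ≤ s ^ t := Nat.one_le_pow _ _ (by omega)
    rw [pow_succ]
    nlinarith

lemma exists_odd_lt_add_one_mul_eq_pow_add_one {s t : ℕ} (hs : Odd s) (hs3 : 3 ≤ s)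
    (ht : Odd t) (ht3 : 3 ≤ t) : ∃ c, Odd c ∧ t < c ∧ (s + 1) * c = s ^ t + 1 := by
  obtain ⟨c, hc⟩ : s + 1 ∣ s ^ t + 1 := by simpa using ht.nat_add_dvd_pow_add_pow s 1
  refine ⟨c, odd_of_add_one_mul_eq_pow_add_one hs ht hc.symm, ?_, hc.symm⟩
  exact Nat.lt_of_mul_lt_mul_left (hc ▸ add_one_mul_lt_pow_add_one hs3 (by omega))

lemma not_dvd_add_one_of_unique_odd_prime_factor {s t r : ℕ} (hs : Odd s) (hs3 : 3 ≤ s)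
    (ht : Odd t) (ht3 : 3 ≤ t) (hr : r.Prime) (hr2 : Odd r)
    (huniq : ∀ ℓ, ℓ.Prime → Odd ℓ → ℓ ∣ s ^ t + 1 → ℓ = r) : ¬ r ∣ s + 1 := by
  intro hrs
  have := Fact.mk hr
  obtain ⟨c, hcodd, htc, hc⟩ := exists_odd_lt_add_one_mul_eq_pow_add_one hs hs3 ht ht3
  have hc0 : c ≠ 0 := hcodd.pos.ne'
  have hcpow : c = r ^ c.primeFactorsList.length :=
    Nat.eq_prime_pow_of_unique_prime_dvd hc0 fun hd hdc =>
      huniq _ hd (hcodd.of_dvd_nat hdc) (hc ▸ dvd_mul_of_dvd_right hdc _)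
  have hnrs : ¬ r ∣ s := fun h => hr.one_lt.ne' (Nat.dvd_one.1 ((Nat.dvd_add_right h).1 hrs))
  have hval : padicValNat r c = padicValNat r t := by
    have := padicValNat.pow_add_pow (y := 1) hr2 hrs hnrs ht
    rw [one_pow, ← hc, padicValNat.mul (by omega) hc0] at this
    omega
  have hct : c ∣ t := by
    rw [hcpow, ← padicValNat.prime_pow (p := r) c.primeFactorsList.length, ← hcpow, hval]
    exact pow_padicValNat_dvd
  exact absurd (Nat.le_of_dvd (by omega) hct) (by omega)

lemma isPowerOfTwo_add_one_of_unique_odd_prime_factor {s t r : ℕ} (hs : Odd s) (hs3 : 3 ≤ s)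
    (ht : Odd t) (ht3 : 3 ≤ t) (huniq : ∀ ℓ, ℓ.Prime → Odd ℓ → ℓ ∣ s ^ t + 1 → ℓ = r) :
    (s + 1).isPowerOfTwo := by
  refine ⟨_, Nat.eq_prime_pow_of_unique_prime_dvd (by omega) fun {d} hd hds => ?_⟩
  by_contra hd2
  have hdodd := hd.odd_of_ne_two hd2
  obtain rfl : d = r :=
    huniq d hd hdodd (hds.trans (by simpa using ht.nat_add_dvd_pow_add_pow s 1))
  exact not_dvd_add_one_of_unique_odd_prime_factor hs hs3 ht ht3 hd hdodd huniq hds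

lemma not_isPowerOfTwo_pow_add_one {s t : ℕ} (hs : Odd s) (hs3 : 3 ≤ s) (ht : Odd t)
    (ht3 : 3 ≤ t) : ¬ (s ^ t + 1).isPowerOfTwo := by
  rintro ⟨k, hk⟩
  obtain ⟨c, hcodd, htc, hc⟩ := exists_odd_lt_add_one_mul_eq_pow_add_one hs hs3 ht ht3
  have hc1 : c = 1 :=
    ((Nat.coprime_two_right.2 hcodd).pow_right k).eq_one_of_dvd (hk ▸ hc ▸ dvd_mul_left c _)
  omega

lemma not_isPowerOfTwo_sq_add_one {w : ℕ} (hw : Odd w) (hw1 : 1 < w) :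
    ¬ (w ^ 2 + 1).isPowerOfTwo := by
  rintro ⟨k, hk⟩
  obtain ⟨j, rfl⟩ := hw
  have hsq : (2 * j + 1) ^ 2 + 1 = 4 * (j ^ 2 + j) + 2 := by ring
  match k with
  | 0 => simp at hk
  | 1 => simp at hk; omega
  | k + 2 => rw [pow_add] at hk; omega

lemma mem_ppdSet_two_of_dvd_add_one {q r : ℕ} (hr : r.Prime) (hr2 : Odd r) (hrq : r ∣ q + 1) :
    r ∈ ppdSet q 2 := by
  refine ⟨hr, ?_, fun i hi1 hi2 hrq' => ?_⟩
  · have := Nat.sq_sub_sq q 1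
    rw [one_pow] at this
    exact this ▸ dvd_mul_of_dvd_left hrq _
  · obtain rfl : i = 1 := by omega
    have : r ∣ 2 := by
      rcases Nat.eq_zero_or_pos q with rfl | hq
      · exact (by simpa using hrq : r ∣ 1).trans (one_dvd 2)
      · rw [pow_one] at hrq'
        simpa [show q + 1 - (q - 1) = 2 by omega] using Nat.dvd_sub hrq hrq'
    obtain rfl := (Nat.prime_dvd_prime_iff_eq hr Nat.prime_two).1 this
    exact absurd hr2 (by decide)

/-- If `q = p^f` with `p` an odd prime and `q^2 - 1` has a unique primitive
prime divisor `r`, then `q = 9` (and `r = 5`), or `f` is a power of `2`, or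
`p` is a Mersenne prime and `f` is prime. -/
theorem stmt7 (p f q r : ℕ) (hp : p.Prime) (hpodd : Odd p) (hf : 0 < f)
    (hq : q = p ^ f) (h : ppdSet q 2 = {r}) :
    (q = 9 ∧ r = 5) ∨ (∃ m : ℕ, f = 2 ^ m) ∨ (IsMersennePrime p ∧ f.Prime) := by
  subst hq
  have hp3 : 3 ≤ p := three_le_of_odd_of_ne_one hpodd hp.one_lt.ne'
  have huniq : ∀ ℓ, ℓ.Prime → Odd ℓ → ℓ ∣ p ^ f + 1 → ℓ = r := fun ℓ hℓ hℓ2 hℓq => by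
    simpa [h] using mem_ppdSet_two_of_dvd_add_one hℓ hℓ2 hℓq
  have hpowTwo : ∀ a b, Odd b → 3 ≤ b → f = a * b → (p ^ a + 1).isPowerOfTwo := by
    rintro a b hb hb3 rfl
    refine isPowerOfTwo_add_one_of_unique_odd_prime_factor hpodd.pow ?_ hb hb3 (r := r) ?_
    · exact hp3.trans (Nat.le_self_pow (by rintro rfl; simp at hf) p)
    · simpa [pow_mul] using huniq
  obtain ⟨m, t, ht, rfl⟩ := Nat.exists_eq_two_pow_mul_odd hf.ne'
  obtain rfl | ht1 := eq_or_ne t 1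
  · exact Or.inr (Or.inl ⟨m, mul_one _⟩)
  have ht3 := three_le_of_odd_of_ne_one ht ht1
  obtain rfl : m = 0 := by
    by_contra hm
    obtain ⟨m, rfl⟩ := Nat.exists_eq_add_one_of_ne_zero hm
    refine not_isPowerOfTwo_sq_add_one (hpodd.pow (n := 2 ^ m)) ?_ ?_
    · exact lt_of_lt_of_le (by omega) (Nat.le_self_pow (by positivity) p)
    · rw [← pow_mul, ← pow_succ]
      exact hpowTwo _ t ht ht3 rfl
  simp only [pow_zero, one_mul] at hpowTwo ⊢
  obtain ⟨k, hk⟩ := hpowTwo 1 t ht ht3 (one_mul t).symm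
  rw [pow_one] at hk
  refine Or.inr (Or.inr ⟨⟨hp, k, Nat.pos_of_ne_zero ?_, by omega⟩, ?_⟩)
  · rintro rfl
    simp at hk
    omega
  by_contra hnp
  obtain ⟨a, b, ha, hb, rfl⟩ := (Nat.not_prime_iff_exists_mul_eq (by omega)).1 hnp
  obtain ⟨hao, hbo⟩ := Nat.odd_mul.1 ht
  have ha3 := three_le_of_odd_of_ne_one hao (by rintro rfl; omega)
  have hb3 := three_le_of_odd_of_ne_one hbo (by rintro rfl; omega)
  exact not_isPowerOfTwo_pow_add_one hpodd hp3 hao ha3 (hpowTwo a b hbo hb3 rfl)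
end

section
/- Let p ≥ 3 be a prime. The only integer solutions (x,y) to the equation x^2 + x + 1 = 3·y^p are (x,y) = (1,1) and (x,y) = (-2,1). -/
/-!
With `x = 3c + 1` the equation becomes `(c + 1)³ - c³ = yᵖ`. For `p = 3` Fermat's Last Theorem
for cubes leaves only `c ∈ {0, -1}`. For `p ≥ 5`, `(c + 1)³ - c³` is the norm of
`α = (c + 1) + (2c + 1)ω` in the Euclidean ring `ℤ[ω]`; as `α` has trace `1` it is coprime to its
conjugate, and since every unit is a sixth root of unity, `α = δᵖ`. The traces `Vₙ = tr δⁿ` form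
the Lucas sequence with parameters `s = tr δ`, `y = N δ`, and `V_p = tr α = 1`. As `s ∣ V_p`,
`s = ±1`. For `s = -1`, `V_p ≡ (-1)ᵖ (mod y)` gives `y ∣ 2`; for `s = 1`, expanding `V_p` modulo
`y³` gives `y² ∣ 2p - p (p - 3) y`, hence `y ∣ p`, and `y = p` would force `p ∣ 2`.
-/

theorem Int.abs_two_mul_bmod_le (x : ℤ) {n : ℕ} (hn : 0 < n) : |2 * x.bmod n| ≤ n := by
  have h₁ := Int.le_bmod (x := x) hn
  have h₂ := Int.bmod_le (x := x) hn
  rw [abs_le]; constructor <;> omega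

/-- The Eisenstein integers `ℤ[ω]`, `ω² = -1 - ω`. -/
abbrev EisensteinInt := QuadraticAlgebra ℤ (-1) (-1)

namespace EisensteinInt

open QuadraticAlgebra

theorem four_mul_norm (z : EisensteinInt) :
    4 * norm z = (2 * z.re - z.im) ^ 2 + 3 * z.im ^ 2 := by
  rw [norm_def]; ring

theorem norm_nonneg (z : EisensteinInt) : 0 ≤ norm z := by
  nlinarith [four_mul_norm z, sq_nonneg (2 * z.re - z.im), sq_nonneg z.im]

theorem norm_eq_zero_iff {z : EisensteinInt} : norm z = 0 ↔ z = 0 := by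
  refine ⟨fun h => ?_, fun h => by rw [h, QuadraticAlgebra.norm_zero]⟩
  have him : z.im = 0 := by nlinarith [four_mul_norm z, sq_nonneg (2 * z.re - z.im)]
  have hre : z.re = 0 := by nlinarith [four_mul_norm z]
  ext <;> assumption

theorem norm_pos {z : EisensteinInt} (hz : z ≠ 0) : 0 < norm z :=
  (norm_nonneg z).lt_of_ne (Ne.symm (mt norm_eq_zero_iff.mp hz))

theorem norm_lt_sq {z : EisensteinInt} {n : ℤ} (hn : 0 < n) (hre : |2 * z.re| ≤ n)
    (him : |2 * z.im| ≤ n) : norm z < n ^ 2 := by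
  obtain ⟨hre₁, hre₂⟩ := abs_le.mp hre
  obtain ⟨him₁, him₂⟩ := abs_le.mp him
  nlinarith [four_mul_norm z, mul_nonneg (sub_nonneg.mpr hre₂) (sub_nonneg.mpr him₂),
    mul_nonneg (neg_le_iff_add_nonneg.mp hre₁) (neg_le_iff_add_nonneg.mp him₁),
    mul_nonneg (sub_nonneg.mpr hre₂) (neg_le_iff_add_nonneg.mp hre₁),
    mul_nonneg (sub_nonneg.mpr him₂) (neg_le_iff_add_nonneg.mp him₁)]

/-- Rounds both coordinates of `z * star w / norm w` to a nearest integer. -/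
def div (z w : EisensteinInt) : EisensteinInt :=
  ⟨(z * star w).re.bdiv (norm w).toNat, (z * star w).im.bdiv (norm w).toNat⟩

def mod (z w : EisensteinInt) : EisensteinInt := z - w * div z w

theorem norm_mod_lt (z : EisensteinInt) {w : EisensteinInt} (hw : w ≠ 0) :
    norm (mod z w) < norm w := by
  have hn := norm_pos hw
  set N := (norm w).toNat
  have hN : (N : ℤ) = norm w := Int.toNat_of_nonneg hn.le
  have hmod : mod z w * star w = ⟨(z * star w).re.bmod N, (z * star w).im.bmod N⟩ := by
    have hw' : w * star w = (N : EisensteinInt) := by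
      rw [← algebraMap_norm_eq_mul_star, ← hN]; rfl
    rw [mod, sub_mul, mul_right_comm, hw', div]
    generalize z * star w = e
    ext <;> simp only [Int.reduceNeg, nsmul_mk, re_sub, im_sub] <;>
      linarith [Int.bmod_add_bdiv e.re N, Int.bmod_add_bdiv e.im N]
  have hlt : norm (mod z w * star w) < norm w ^ 2 := by
    rw [hmod]
    exact norm_lt_sq hn (hN ▸ Int.abs_two_mul_bmod_le _ (by omega))
      (hN ▸ Int.abs_two_mul_bmod_le _ (by omega))
  rw [map_mul, QuadraticAlgebra.norm_star, sq] at hlt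
  exact lt_of_mul_lt_mul_right hlt hn.le

theorem norm_le_norm_mul_left (z : EisensteinInt) {w : EisensteinInt} (hw : w ≠ 0) :
    norm z ≤ norm (z * w) := by
  rw [map_mul]
  exact le_mul_of_one_le_right (norm_nonneg z) (norm_pos hw)

instance : EuclideanDomain EisensteinInt :=
  { QuadraticAlgebra.instCommRing, QuadraticAlgebra.instNontrivial with
    quotient := div
    remainder := mod
    quotient_zero z := by ext <;> simp [div]
    quotient_mul_add_remainder_eq z w := by simp [mod]
    r := InvImage (· < ·) fun z : EisensteinInt => (norm z).toNat
    r_wellFounded := (measure fun z : EisensteinInt => (norm z).toNat).wf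
    remainder_lt z w hw := by
      have := norm_mod_lt z hw
      have := norm_nonneg (mod z w)
      show (norm (mod z w)).toNat < (norm w).toNat
      omega
    mul_left_not_lt z w hw := by
      have := norm_le_norm_mul_left z hw
      show ¬ (norm (z * w)).toNat < (norm z).toNat
      omega }

theorem pow_six_eq_one_of_isUnit {u : EisensteinInt} (hu : IsUnit u) : u ^ 6 = 1 := by
  have hN : norm u = 1 := by
    have := Int.isUnit_iff.mp (isUnit_iff_norm_isUnit.mp hu)
    have := norm_nonneg u
    omega
  obtain ⟨a, b⟩ := u
  have h4 := four_mul_norm ⟨a, b⟩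
  rw [hN] at h4
  have hb : -1 ≤ b ∧ b ≤ 1 := by constructor <;> nlinarith [sq_nonneg (2 * a - b)]
  have ha : -1 ≤ a ∧ a ≤ 1 := by constructor <;> nlinarith [sq_nonneg (2 * a - b)]
  obtain ⟨hb₁, hb₂⟩ := hb
  obtain ⟨ha₁, ha₂⟩ := ha
  interval_cases a <;> interval_cases b <;> first | decide | norm_num at h4

/-- The unit factor is a sixth root of unity, hence a `p`-th power when `p` is coprime to `6`. -/
theorem exists_pow_eq_of_norm_eq_pow {α : EisensteinInt} {p : ℕ} {y : ℤ} (hp : p.Coprime 6)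
    (hα : IsCoprime α (star α)) (hN : norm α = y ^ p) : ∃ δ, δ ^ p = α := by
  have hprod : α * star α = (y : EisensteinInt) ^ p := by
    rw [← algebraMap_norm_eq_mul_star, hN]; push_cast; rfl
  obtain ⟨δ, u, hu⟩ := exists_associated_pow_of_mul_eq_pow' hα hprod
  obtain ⟨m, hm⟩ := exists_pow_eq_self_of_coprime
    (hp.coprime_dvd_right (orderOf_dvd_of_pow_eq_one (pow_six_eq_one_of_isUnit u.isUnit)))
  refine ⟨δ * (u : EisensteinInt) ^ m, ?_⟩
  rw [mul_pow, ← pow_mul, mul_comm m, pow_mul, hm, hu]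

end EisensteinInt

/-- The Lucas sequence `Vₙ(s, y)`: the traces of the powers of a root of `X² - s X + y`. -/
def lucasV {R : Type*} [CommRing R] (s y : R) : ℕ → R
  | 0 => 2
  | 1 => s
  | n + 2 => s * lucasV s y (n + 1) - y * lucasV s y n

section LucasSequence

variable {R : Type*} [CommRing R] (s y : R)

@[simp] theorem lucasV_zero : lucasV s y 0 = 2 := rfl

@[simp] theorem lucasV_one : lucasV s y 1 = s := rfl

theorem lucasV_add_two (n : ℕ) :
    lucasV s y (n + 2) = s * lucasV s y (n + 1) - y * lucasV s y n := rfl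

theorem dvd_lucasV_two_mul_add_one (n : ℕ) : s ∣ lucasV s y (2 * n + 1) := by
  induction n with
  | zero => simp
  | succ n ih =>
    rw [show 2 * (n + 1) + 1 = 2 * n + 1 + 2 by ring, lucasV_add_two]
    exact dvd_sub (dvd_mul_right s _) (dvd_mul_of_dvd_right ih y)

theorem dvd_lucasV_sub_pow (n : ℕ) : y ∣ lucasV s y (n + 1) - s ^ (n + 1) := by
  induction n using Nat.twoStepInduction with
  | zero => simp
  | one => exact ⟨-2, by simp [lucasV_add_two]; ring⟩
  | more n _ ih =>
    obtain ⟨c, hc⟩ := ih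
    exact ⟨s * c - lucasV s y (n + 1), by rw [lucasV_add_two]; linear_combination s * hc⟩

theorem pow_three_dvd_lucasV_one (n : ℕ) :
    y ^ 3 ∣ 2 * lucasV 1 y (n + 3) - (2 - 2 * (n + 3) * y + (n + 3) * n * y ^ 2) := by
  induction n using Nat.twoStepInduction with
  | zero => exact ⟨0, by simp [lucasV_add_two]; ring⟩
  | one => exact ⟨0, by simp [lucasV_add_two]; ring⟩
  | more n ih₀ ih₁ =>
    obtain ⟨c₀, hc₀⟩ := ih₀
    obtain ⟨c₁, hc₁⟩ := ih₁
    refine ⟨c₁ - y * c₀ - (n + 3) * n, ?_⟩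
    rw [show n + 2 + 3 = n + 3 + 2 by ring, lucasV_add_two]
    push_cast at hc₀ hc₁ ⊢
    linear_combination hc₁ - y * hc₀

end LucasSequence

theorem QuadraticAlgebra.trace_pow {R : Type*} [CommRing R] {a b : R}
    (z : QuadraticAlgebra R a b) (n : ℕ) : trace (z ^ n) = lucasV (trace z) (norm z) n := by
  induction n using Nat.twoStepInduction with
  | zero => simp
  | one => simp
  | more n ih₀ ih₁ =>
    rw [lucasV_add_two, ← ih₀, ← ih₁, pow_add, sq_eq_trace_smul_sub_norm, mul_sub,
      ← Algebra.commutes, ← Algebra.smul_def, mul_smul_comm, map_sub, map_smul, map_smul,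
      smul_eq_mul, smul_eq_mul, pow_succ]

theorem eq_one_of_dvd_two_of_odd {y : ℤ} (hy : 0 < y) (hyo : Odd y) (h : y ∣ 2) : y = 1 := by
  obtain ⟨k, rfl⟩ := hyo
  have := Int.le_of_dvd two_pos h
  omega

theorem eq_one_of_lucasV_one_eq_one {p : ℕ} (hp : p.Prime) (hp2 : p ≠ 2) {y : ℤ} (hy : 0 < y)
    (hyo : Odd y) (h : lucasV 1 y p = 1) : y = 1 := by
  obtain ⟨n, rfl⟩ : ∃ n, p = n + 3 := ⟨p - 3, by have := hp.two_le; omega⟩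
  have hsq : y ^ 2 ∣ 2 * (n + 3) - (n + 3) * n * y := by
    refine (mul_dvd_mul_iff_left hy.ne').mp ?_
    convert pow_three_dvd_lucasV_one y n using 1 <;> [ring; (rw [h]; ring)]
  have hdvd : y ∣ 2 * (n + 3 : ℕ) := by
    push_cast
    simpa using dvd_add ((dvd_pow_self y two_ne_zero).trans hsq) (dvd_mul_left y ((n + 3) * n))
  rcases hp.eq_one_or_self_of_dvd _ (Int.natAbs_dvd_natAbs.mpr
      ((Int.isCoprime_two_right.mpr hyo).dvd_of_dvd_mul_left hdvd)) with hy_one | hy_p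
  · omega
  · obtain rfl : y = n + 3 := by omega
    obtain ⟨k, hk⟩ := hsq
    exact eq_one_of_dvd_two_of_odd hy hyo
      ((mul_dvd_mul_iff_left hy.ne').mp ⟨k + n, by linear_combination hk⟩)

theorem eq_one_of_lucasV_eq_one {p : ℕ} (hp : p.Prime) (hp2 : p ≠ 2) {s y : ℤ} (hy : 0 < y)
    (hyo : Odd y) (h : lucasV s y p = 1) : y = 1 := by
  obtain ⟨t, rfl⟩ := hp.odd_of_ne_two hp2
  rcases Int.isUnit_iff.mp (isUnit_of_dvd_one (h ▸ dvd_lucasV_two_mul_add_one s y t)) with rfl | rfl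
  · exact eq_one_of_lucasV_one_eq_one hp hp2 hy hyo h
  · have := dvd_lucasV_sub_pow (-1) y (2 * t)
    rw [h, (Odd.neg_one_pow ⟨t, rfl⟩)] at this
    exact eq_one_of_dvd_two_of_odd hy hyo (by simpa using this)

theorem pos_of_succ_cube_sub_cube_eq_pow {p : ℕ} (hp : Odd p) {c y : ℤ}
    (h : (c + 1) ^ 3 - c ^ 3 = y ^ p) : 0 < y :=
  hp.pow_pos_iff.mp (h ▸ by nlinarith [sq_nonneg (2 * c + 1)])

theorem odd_of_succ_cube_sub_cube_eq_pow {p : ℕ} (hp : p ≠ 0) {c y : ℤ}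
    (h : (c + 1) ^ 3 - c ^ 3 = y ^ p) : Odd y := by
  have hodd : Odd (y ^ p) := by
    rw [← h, show (c + 1) ^ 3 - c ^ 3 = 3 * (c * (c + 1)) + 1 by ring]
    exact ((Int.even_mul_succ_self c).mul_left 3).add_one
  exact (Int.odd_pow.mp hodd).resolve_right hp

theorem eq_one_of_succ_cube_sub_cube_eq_cube {c y : ℤ} (h : (c + 1) ^ 3 - c ^ 3 = y ^ 3) :
    y = 1 := by
  have hy := pos_of_succ_cube_sub_cube_eq_pow (by decide) h
  have hc : c + 1 = 0 ∨ -c = 0 := by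
    by_contra! hc
    exact fermatLastTheoremFor_iff_int.mp fermatLastTheoremThree _ _ _ hc.1 hc.2 hy.ne'
      (by linear_combination h)
  have hy3 : y ^ 3 = 1 := by
    obtain rfl | rfl : c = -1 ∨ c = 0 := by omega
    all_goals linear_combination -h
  exact (pow_eq_one_iff_of_nonneg hy.le three_ne_zero).mp hy3

open QuadraticAlgebra in
theorem eq_one_of_succ_cube_sub_cube_eq_pow_of_coprime_six {p : ℕ} (hp : p.Prime)
    (hp6 : p.Coprime 6) {c y : ℤ} (h : (c + 1) ^ 3 - c ^ 3 = y ^ p) : y = 1 := by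
  have hp2 : p ≠ 2 := by rintro rfl; norm_num at hp6
  have hy := pos_of_succ_cube_sub_cube_eq_pow (hp.odd_of_ne_two hp2) h
  set α : EisensteinInt := ⟨c + 1, 2 * c + 1⟩
  have htrace : trace α = 1 := by rw [trace_def]; ring
  have hcop : IsCoprime α (star α) := ⟨1, 1, by
    rw [one_mul, one_mul, ← algebraMap_trace_eq_add_star, htrace, map_one]⟩
  obtain ⟨δ, hδ⟩ := EisensteinInt.exists_pow_eq_of_norm_eq_pow hp6 hcop
    (by rw [← h, norm_def]; ring)
  have hNδ : norm δ = y := by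
    refine (pow_left_inj₀ (EisensteinInt.norm_nonneg δ) hy.le hp.ne_zero).mp ?_
    rw [← map_pow, hδ, norm_def, ← h]; ring
  refine eq_one_of_lucasV_eq_one (s := trace δ) hp hp2 hy
    (odd_of_succ_cube_sub_cube_eq_pow hp.ne_zero h) ?_
  rw [← hNδ, ← trace_pow, hδ, htrace]

theorem eq_one_of_succ_cube_sub_cube_eq_pow {p : ℕ} (hp : p.Prime) (hp3 : 3 ≤ p) {c y : ℤ}
    (h : (c + 1) ^ 3 - c ^ 3 = y ^ p) : y = 1 := by
  rcases eq_or_ne p 3 with rfl | hp3'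
  · exact eq_one_of_succ_cube_sub_cube_eq_cube h
  · refine eq_one_of_succ_cube_sub_cube_eq_pow_of_coprime_six hp ?_ h
    exact Nat.Coprime.mul_right ((Nat.coprime_primes hp Nat.prime_two).mpr (by omega))
      ((Nat.coprime_primes hp Nat.prime_three).mpr hp3')

/-- Theorem of Nagell: for a prime `p ≥ 3`, the only integer solutions of
`x^2 + x + 1 = 3 y^p` are `(x, y) = (1, 1)` and `(x, y) = (-2, 1)`. -/
theorem stmt8 (p : ℕ) (hp : p.Prime) (hp3 : 3 ≤ p) (x y : ℤ)
    (h : x ^ 2 + x + 1 = 3 * y ^ p) :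
    (x = 1 ∧ y = 1) ∨ (x = -2 ∧ y = 1) := by
  obtain ⟨c, hc⟩ : 3 ∣ x - 1 :=
    Int.prime_three.dvd_of_dvd_pow (n := 2) ⟨y ^ p - x, by linear_combination h⟩
  obtain rfl : x = 3 * c + 1 := by linear_combination hc
  have hcube : (c + 1) ^ 3 - c ^ 3 = y ^ p :=
    mul_left_cancel₀ three_ne_zero (by linear_combination h)
  obtain rfl := eq_one_of_succ_cube_sub_cube_eq_pow hp hp3 hcube
  have hc : c * (c + 1) = 0 := by rw [one_pow] at hcube; linarith
  have hc' := mul_eq_zero.mp hc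
  omega
end

section
/- Let G be a finite group acting transitively on a finite set Ω with |Ω| ≥ 2, let H be the stabiliser in G of a point of Ω, and let N be a normal subgroup of G. Suppose r is a prime which divides |N| but does not divide |H ∩ N|. Then N contains an element of order r, and every element of order r in N is a derangement. -/
/-!
An element `x ∈ N` fixing `g • ω₀` conjugates, via `g`, to `g⁻¹ x g ∈ Stab(ω₀) ∩ N` (normality of
`N`), so its order divides `|H ∩ N|`; hence elements of order `r` fix nothing. Cauchy's theorem in
`N` provides such an element.
-/

open MulAction

theorem orderOf_dvd_card_stabilizer_inf_of_smul_eq {G Ω : Type*} [Group G] [MulAction G Ω]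
    [IsPretransitive G Ω] {N : Subgroup G} (hN : N.Normal) {x : G} (hxN : x ∈ N) {ω : Ω}
    (hx : x • ω = ω) (ω₀ : Ω) :
    orderOf x ∣ Nat.card (stabilizer G ω₀ ⊓ N : Subgroup G) := by
  obtain ⟨g, rfl⟩ := exists_smul_eq G ω₀ ω
  have hconj : g⁻¹ * x * g ∈ stabilizer G ω₀ ⊓ N :=
    ⟨by simpa [mul_smul, inv_smul_eq_iff] using hx, by simpa using hN.conj_mem x hxN g⁻¹⟩
  calc orderOf x = orderOf (g⁻¹ * x * g) :=
        SemiconjBy.orderOf_eq g⁻¹ (by simp [SemiconjBy, mul_assoc])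
    _ ∣ _ := Subgroup.orderOf_dvd_natCard _ hconj

theorem Subgroup.exists_mem_orderOf_eq_of_prime_dvd_card {G : Type*} [Group G] [Finite G]
    (N : Subgroup G) {r : ℕ} (hr : r.Prime) (hdvd : r ∣ Nat.card N) :
    ∃ x ∈ N, orderOf x = r := by
  have : Fact r.Prime := ⟨hr⟩
  obtain ⟨⟨x, hxN⟩, hx⟩ := exists_prime_orderOf_dvd_card' (G := N) r hdvd
  exact ⟨x, hxN, by rwa [Subgroup.orderOf_mk] at hx⟩

theorem stmt15_general {G : Type*} [Group G] [Finite G] {Ω : Type*}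
    [MulAction G Ω] [MulAction.IsPretransitive G Ω]
    (ω₀ : Ω) (N : Subgroup G) (hN : N.Normal) (r : ℕ) (hr : r.Prime)
    (hdvd : r ∣ Nat.card N)
    (hndvd : ¬ r ∣ Nat.card (MulAction.stabilizer G ω₀ ⊓ N : Subgroup G)) :
    (∃ x ∈ N, orderOf x = r) ∧
    ∀ x ∈ N, orderOf x = r → ∀ ω : Ω, x • ω ≠ ω :=
  ⟨N.exists_mem_orderOf_eq_of_prime_dvd_card hr hdvd, fun _x hxN hx _ω hfix =>
    hndvd (hx ▸ orderOf_dvd_card_stabilizer_inf_of_smul_eq hN hxN hfix ω₀)⟩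

/-- If `G` acts transitively on `Ω` (`|Ω| ≥ 2`) with point stabiliser
`H = Stab_G(ω₀)`, `N ⊴ G`, and `r` is a prime dividing `|N|` but not
`|H ∩ N|`, then `N` contains an element of order `r` and every element of
order `r` in `N` is a derangement. -/
theorem stmt15 {G : Type*} [Group G] [Finite G] {Ω : Type*} [Finite Ω]
    [MulAction G Ω] [MulAction.IsPretransitive G Ω] (hΩ : 2 ≤ Nat.card Ω)
    (ω₀ : Ω) (N : Subgroup G) (hN : N.Normal) (r : ℕ) (hr : r.Prime)
    (hdvd : r ∣ Nat.card N)
    (hndvd : ¬ r ∣ Nat.card (MulAction.stabilizer G ω₀ ⊓ N : Subgroup G)) :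
    (∃ x ∈ N, orderOf x = r) ∧
    ∀ x ∈ N, orderOf x = r → ∀ ω : Ω, x • ω ≠ ω :=
  stmt15_general ω₀ N hN r hr hdvd hndvd
end

section
/- Let G be a finite group acting transitively on a finite set Ω with |Ω| ≥ 2, let H be the stabiliser in G of a point of Ω, and let N be a normal subgroup of G. Suppose there exist two distinct primes r and s which both divide |N| but neither of which divides |H ∩ N|. Then G is not almost elusive; in fact G contains derangements of order r and derangements of order s, and these lie in distinct conjugacy classes of G. -/
/-!
Conjugation by `g` carries `Stab(ω₀) ∩ N` onto `Stab(g • ω₀) ∩ N`, so by transitivity every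
point stabiliser in `N` has the order of `H ∩ N`. Hence an element of `N` whose order does not
divide `|H ∩ N|` fixes no point. By Cauchy's theorem `N` contains elements of orders `r` and `s`;
both are derangements, and they are not conjugate because conjugate elements have equal orders.
-/

open MulAction

lemma IsConj.orderOf_eq {G : Type*} [Group G] {x y : G} (h : IsConj x y) :
    orderOf x = orderOf y := by
  obtain ⟨c, hc⟩ := h
  exact hc.orderOf_eq (c : G)

section Stabilizer

variable {G : Type*} [Group G] {Ω : Type*} [MulAction G Ω] (N : Subgroup G) [N.Normal]

lemma MulAction.stabilizer_smul_inf_normal (g : G) (ω : Ω) :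
    stabilizer G (g • ω) ⊓ N = (stabilizer G ω ⊓ N).map (MulAut.conj g).toMonoidHom := by
  rw [Subgroup.map_inf_eq _ _ _ (MulAut.conj g).injective, ← stabilizer_smul_eq_stabilizer_map_conj]
  congr
  exact (Subgroup.Normal.map_conj_eq (H := N) g).symm

lemma MulAction.card_stabilizer_inf_normal_eq [IsPretransitive G Ω] (ω₀ ω : Ω) :
    Nat.card (stabilizer G ω ⊓ N : Subgroup G) = Nat.card (stabilizer G ω₀ ⊓ N : Subgroup G) := by
  obtain ⟨g, rfl⟩ := exists_smul_eq G ω₀ ω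
  rw [stabilizer_smul_inf_normal]
  exact Subgroup.card_map_of_injective (MulAut.conj g).injective

lemma MulAction.smul_ne_of_orderOf_not_dvd_card_stabilizer_inf [IsPretransitive G Ω] (ω₀ : Ω)
    {x : G} (hx : x ∈ N)
    (hdvd : ¬ orderOf x ∣ Nat.card (stabilizer G ω₀ ⊓ N : Subgroup G)) (ω : Ω) : x • ω ≠ ω := by
  intro hfix
  apply hdvd
  rw [← card_stabilizer_inf_normal_eq N ω₀ ω]
  exact Subgroup.orderOf_dvd_natCard _ ⟨hfix, hx⟩

lemma MulAction.exists_orderOf_eq_forall_smul_ne [Finite G] [IsPretransitive G Ω] (ω₀ : Ω)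
    {p : ℕ} (hp : p.Prime) (hdvd : p ∣ Nat.card N)
    (hndvd : ¬ p ∣ Nat.card (stabilizer G ω₀ ⊓ N : Subgroup G)) :
    ∃ x : G, orderOf x = p ∧ ∀ ω : Ω, x • ω ≠ ω := by
  have : Fact p.Prime := ⟨hp⟩
  obtain ⟨x, hx⟩ := exists_prime_orderOf_dvd_card' (G := N) p hdvd
  rw [← Subgroup.orderOf_coe] at hx
  exact ⟨x, hx, smul_ne_of_orderOf_not_dvd_card_stabilizer_inf N ω₀ x.2 (hx ▸ hndvd)⟩

end Stabilizer

theorem stmt16_general {G : Type*} [Group G] [Finite G] {Ω : Type*}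
    [MulAction G Ω] [MulAction.IsPretransitive G Ω]
    (ω₀ : Ω) (N : Subgroup G) (hN : N.Normal) (r s : ℕ) (hr : r.Prime)
    (hs : s.Prime) (hrs : r ≠ s)
    (hdr : r ∣ Nat.card N) (hds : s ∣ Nat.card N)
    (hnr : ¬ r ∣ Nat.card (MulAction.stabilizer G ω₀ ⊓ N : Subgroup G))
    (hns : ¬ s ∣ Nat.card (MulAction.stabilizer G ω₀ ⊓ N : Subgroup G)) :
    ¬ ((∃ x : G, (orderOf x).Prime ∧ ∀ ω : Ω, x • ω ≠ ω) ∧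
        (∀ x y : G, (orderOf x).Prime → (∀ ω : Ω, x • ω ≠ ω) →
          (orderOf y).Prime → (∀ ω : Ω, y • ω ≠ ω) → IsConj x y)) ∧
    ∃ x y : G, orderOf x = r ∧ orderOf y = s ∧ (∀ ω : Ω, x • ω ≠ ω) ∧
      (∀ ω : Ω, y • ω ≠ ω) ∧ ¬ IsConj x y := by
  obtain ⟨x, hxr, hx⟩ := exists_orderOf_eq_forall_smul_ne N ω₀ hr hdr hnr
  obtain ⟨y, hys, hy⟩ := exists_orderOf_eq_forall_smul_ne N ω₀ hs hds hns
  have hxy : ¬ IsConj x y := fun h => hrs (hxr ▸ hys ▸ h.orderOf_eq)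
  exact ⟨fun ⟨_, hconj⟩ => hxy (hconj x y (hxr ▸ hr) hx (hys ▸ hs) hy),
    x, y, hxr, hys, hx, hy, hxy⟩

/-- If `G` acts transitively on `Ω` (`|Ω| ≥ 2`) with point stabiliser
`H = Stab_G(ω₀)`, `N ⊴ G`, and `r ≠ s` are primes dividing `|N|` but not
`|H ∩ N|`, then `G` is not almost elusive: it contains derangements of order
`r` and of order `s`, lying in distinct conjugacy classes. -/
theorem stmt16 {G : Type*} [Group G] [Finite G] {Ω : Type*} [Finite Ω]
    [MulAction G Ω] [MulAction.IsPretransitive G Ω] (hΩ : 2 ≤ Nat.card Ω)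
    (ω₀ : Ω) (N : Subgroup G) (hN : N.Normal) (r s : ℕ) (hr : r.Prime)
    (hs : s.Prime) (hrs : r ≠ s)
    (hdr : r ∣ Nat.card N) (hds : s ∣ Nat.card N)
    (hnr : ¬ r ∣ Nat.card (MulAction.stabilizer G ω₀ ⊓ N : Subgroup G))
    (hns : ¬ s ∣ Nat.card (MulAction.stabilizer G ω₀ ⊓ N : Subgroup G)) :
    ¬ ((∃ x : G, (orderOf x).Prime ∧ ∀ ω : Ω, x • ω ≠ ω) ∧
        (∀ x y : G, (orderOf x).Prime → (∀ ω : Ω, x • ω ≠ ω) →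
          (orderOf y).Prime → (∀ ω : Ω, y • ω ≠ ω) → IsConj x y)) ∧
    ∃ x y : G, orderOf x = r ∧ orderOf y = s ∧ (∀ ω : Ω, x • ω ≠ ω) ∧
      (∀ ω : Ω, y • ω ≠ ω) ∧ ¬ IsConj x y :=
  stmt16_general ω₀ N hN r s hr hs hrs hdr hds hnr hns
end
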